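/- The 8×8 complex matrix U = (1/√2)(S₀⊗I₂⊗I₂ + S₁⊗σ₃⊗σ₃ + S₂⊗σ₁⊗σ₁ + S₃⊗σ₂⊗σ₂) is unitary and has Schmidt rank exactly 4. -/

import Mathlib

open Matrix Kronecker Complex

/-- The tripartite Schmidt rank of an 8×8 complex matrix, viewed as a matrix on
ℂ² ⊗ ℂ² ⊗ ℂ² via Kronecker products: the least `r` such that
`U = ∑ j, A j ⊗ₖ (B j ⊗ₖ C j)` with 2×2 matrices `A j`, `B j`, `C j`. -/
noncomputable def sr (U : Matrix (Fin 2 × Fin 2 × Fin 2) (Fin 2 × Fin 2 × Fin 2) ℂ) : ℕ :=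
  sInf {r | ∃ A B C : Fin r → Matrix (Fin 2) (Fin 2) ℂ,
    U = ∑ j, A j ⊗ₖ (B j ⊗ₖ C j)}

def S0 : Matrix (Fin 2) (Fin 2) ℂ := !![1, 0; 0, 0]
def S1 : Matrix (Fin 2) (Fin 2) ℂ := !![0, 1; 0, 0]
def S2 : Matrix (Fin 2) (Fin 2) ℂ := !![0, 0; 1, 0]
def S3 : Matrix (Fin 2) (Fin 2) ℂ := !![0, 0; 0, 1]
def σ1 : Matrix (Fin 2) (Fin 2) ℂ := !![0, 1; 1, 0]
def σ2 : Matrix (Fin 2) (Fin 2) ℂ := !![0, -I; I, 0]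
def σ3 : Matrix (Fin 2) (Fin 2) ℂ := !![1, 0; 0, -1]
def I2 : Matrix (Fin 2) (Fin 2) ℂ := 1

noncomputable def Ufin : Matrix (Fin 2 × Fin 2 × Fin 2) (Fin 2 × Fin 2 × Fin 2) ℂ :=
  (Real.sqrt 2 : ℂ)⁻¹ • (S0 ⊗ₖ (I2 ⊗ₖ I2) + S1 ⊗ₖ (σ3 ⊗ₖ σ3) +
    S2 ⊗ₖ (σ1 ⊗ₖ σ1) + S3 ⊗ₖ (σ2 ⊗ₖ σ2))

/-!
Cutting `Ufin` along its first tensor factor gives the 2 × 2 block matrix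
`(1/√2) [[1, σ₃⊗σ₃], [σ₁⊗σ₁, σ₂⊗σ₂]]`. The blocks `σₖ⊗σₖ` are Hermitian involutions, and
`σ₃σ₂ = -σ₂σ₃ = -iσ₁` makes the off-diagonal products cancel, so `Ufin` is unitary.
If `Ufin = ∑ A j ⊗ B j ⊗ C j`, every block is a linear combination of the `B j ⊗ C j`; the four
blocks are linearly independent, so at least four terms are needed, and the defining formula
of `Ufin` has exactly four.
-/

namespace Matrix

variable {I J K L R : Type*}

theorem conjTranspose_fin_two [Star R] (a b c d : R) :
    !![a, b; c, d]ᴴ = !![star a, star c; star b, star d] := by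
  ext i j
  fin_cases i <;> fin_cases j <;> rfl

theorem comp_symm_conjTranspose [Star R] (M : Matrix (I × K) (J × K) R) :
    (comp J I K K R).symm Mᴴ = ((comp I J K K R).symm M)ᴴ :=
  rfl

theorem comp_symm_sum_kronecker_mem_span [CommSemiring R] {ι : Type*} [Fintype ι]
    (A : ι → Matrix I J R) (B : ι → Matrix K L R) (i : I) (j : J) :
    (comp I J K L R).symm (∑ t, A t ⊗ₖ B t) i j ∈ Submodule.span R (Set.range B) := by
  have : (comp I J K L R).symm (∑ t, A t ⊗ₖ B t) i j = ∑ t, A t i j • B t := by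
    ext k l
    simp [Matrix.sum_apply]
  rw [this]
  exact Submodule.sum_mem _ fun t _ => Submodule.smul_mem _ _ (Submodule.subset_span ⟨t, rfl⟩)

end Matrix

theorem σ3_mul_σ2 : σ3 * σ2 = -I • σ1 := by
  ext i j; fin_cases i <;> fin_cases j <;> simp [σ1, σ2, σ3]

theorem σ2_mul_σ3 : σ2 * σ3 = I • σ1 := by
  ext i j; fin_cases i <;> fin_cases j <;> simp [σ1, σ2, σ3]

-- `pauli j` is the Pauli matrix paired with the matrix unit `S j` in `Ufin`.
def pauli : Fin 4 → Matrix (Fin 2) (Fin 2) ℂ := ![I2, σ3, σ1, σ2]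

def matrixUnit : Fin 4 → Matrix (Fin 2) (Fin 2) ℂ := ![S0, S1, S2, S3]

def pauliSq (j : Fin 4) : Matrix (Fin 2 × Fin 2) (Fin 2 × Fin 2) ℂ := pauli j ⊗ₖ pauli j

theorem Ufin_eq_sum : Ufin = (Real.sqrt 2 : ℂ)⁻¹ • ∑ j, matrixUnit j ⊗ₖ pauliSq j := by
  rw [Ufin, Fin.sum_univ_four]
  rfl

theorem comp_symm_Ufin :
    (comp (Fin 2) (Fin 2) (Fin 2 × Fin 2) (Fin 2 × Fin 2) ℂ).symm Ufin =
      (Real.sqrt 2 : ℂ)⁻¹ • !![pauliSq 0, pauliSq 1; pauliSq 2, pauliSq 3] := by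
  ext a b : 2
  fin_cases a <;> fin_cases b <;>
    simp [Ufin_eq_sum, Fin.sum_univ_four, matrixUnit, S0, S1, S2, S3]

theorem pauli_mul_self (j : Fin 4) : pauli j * pauli j = 1 := by
  fin_cases j <;> simp [pauli, I2, σ1, σ2, σ3, one_fin_two]

theorem conjTranspose_pauli (j : Fin 4) : (pauli j)ᴴ = pauli j := by
  fin_cases j <;> simp [pauli, I2, σ1, σ2, σ3, conjTranspose_fin_two]

theorem pauliSq_mul_self (j : Fin 4) : pauliSq j * pauliSq j = 1 := by
  rw [pauliSq, ← mul_kronecker_mul, pauli_mul_self, one_kronecker_one]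

theorem conjTranspose_pauliSq (j : Fin 4) : (pauliSq j)ᴴ = pauliSq j := by
  rw [pauliSq, conjTranspose_kronecker, conjTranspose_pauli]

theorem pauliSq_zero : pauliSq 0 = 1 :=
  one_kronecker_one

theorem pauliSq_one_mul_pauliSq_three : pauliSq 1 * pauliSq 3 = -pauliSq 2 := by
  change (σ3 ⊗ₖ σ3) * (σ2 ⊗ₖ σ2) = -(σ1 ⊗ₖ σ1)
  rw [← mul_kronecker_mul, σ3_mul_σ2, smul_kronecker, kronecker_smul, smul_smul, neg_mul_neg,
    I_mul_I, neg_one_smul]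

theorem pauliSq_three_mul_pauliSq_one : pauliSq 3 * pauliSq 1 = -pauliSq 2 := by
  change (σ2 ⊗ₖ σ2) * (σ3 ⊗ₖ σ3) = -(σ1 ⊗ₖ σ1)
  rw [← mul_kronecker_mul, σ2_mul_σ3, smul_kronecker, kronecker_smul, smul_smul, I_mul_I,
    neg_one_smul]

theorem pauliSq_block_mul_self :
    !![pauliSq 0, pauliSq 1; pauliSq 2, pauliSq 3] *
      !![pauliSq 0, pauliSq 2; pauliSq 1, pauliSq 3] = (2 : ℂ) • 1 := by
  simp only [mul_fin_two, pauliSq_mul_self, pauliSq_one_mul_pauliSq_three,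
    pauliSq_three_mul_pauliSq_one, pauliSq_zero, one_mul, mul_one, add_neg_cancel,
    two_smul, one_fin_two]
  ext i j : 1
  fin_cases i <;> fin_cases j <;> simp

theorem inv_sqrt_two_mul_star_mul_two :
    (Real.sqrt 2 : ℂ)⁻¹ * star (Real.sqrt 2 : ℂ)⁻¹ * 2 = 1 := by
  rw [star_inv₀, Complex.star_def, Complex.conj_ofReal, ← mul_inv, ← Complex.ofReal_mul,
    Real.mul_self_sqrt zero_le_two]
  norm_num

theorem Ufin_mul_conjTranspose : Ufin * Ufinᴴ = 1 := by
  apply (compRingEquiv (Fin 2) (Fin 2 × Fin 2) ℂ).symm.injective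
  rw [map_mul, map_one, compRingEquiv_symm_apply, compRingEquiv_symm_apply,
    comp_symm_conjTranspose, comp_symm_Ufin, conjTranspose_smul, conjTranspose_fin_two]
  simp only [star_eq_conjTranspose, conjTranspose_pauliSq]
  rw [smul_mul_smul_comm, pauliSq_block_mul_self, smul_smul, inv_sqrt_two_mul_star_mul_two,
    one_smul]

theorem linearIndependent_pauliSq : LinearIndependent ℂ pauliSq := by
  rw [Fintype.linearIndependent_iff]
  intro g hg
  have entry (p q : Fin 2 × Fin 2) : ∑ j, g j * pauliSq j p q = 0 := by
    simpa [Matrix.sum_apply] using congr_fun₂ hg p q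
  have e1 := entry (0, 0) (0, 0)
  have e2 := entry (0, 1) (0, 1)
  have e3 := entry (0, 0) (1, 1)
  have e4 := entry (0, 1) (1, 0)
  simp only [pauliSq, pauli, I2, σ3, σ1, σ2, Fin.isValue, kroneckerMap_apply, Fin.sum_univ_four,
    cons_val_zero, one_apply_eq, mul_one, cons_val_one, of_apply, cons_val', cons_val_fin_one,
    cons_val, mul_zero, add_zero, mul_neg, ne_eq, zero_ne_one, not_false_eq_true, one_apply_ne,
    zero_add, neg_mul, I_mul_I, neg_neg, one_ne_zero] at e1 e2 e3 e4
  intro j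
  fin_cases j <;> simp only [Fin.reduceFinMk]
  · linear_combination (e1 + e2) / 2
  · linear_combination (e1 - e2) / 2
  · linear_combination (e3 + e4) / 2
  · linear_combination (e4 - e3) / 2

theorem Ufin_eq_sum_kronecker :
    Ufin = ∑ j, ((Real.sqrt 2 : ℂ)⁻¹ • matrixUnit j) ⊗ₖ (pauli j ⊗ₖ pauli j) := by
  simp_rw [smul_kronecker, ← Finset.smul_sum]
  exact Ufin_eq_sum

theorem four_le_of_Ufin_eq_sum_kronecker {r : ℕ} (A B C : Fin r → Matrix (Fin 2) (Fin 2) ℂ)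
    (hU : Ufin = ∑ j, A j ⊗ₖ (B j ⊗ₖ C j)) : 4 ≤ r := by
  set W := Submodule.span ℂ (Set.range fun t => B t ⊗ₖ C t)
  have hc : (Real.sqrt 2 : ℂ)⁻¹ ≠ 0 := by simp
  have hblock (a b : Fin 2) :
      ((Real.sqrt 2 : ℂ)⁻¹ • !![pauliSq 0, pauliSq 1; pauliSq 2, pauliSq 3]) a b ∈ W := by
    rw [← comp_symm_Ufin, hU]
    exact comp_symm_sum_kronecker_mem_span A _ a b
  have hpauli : Submodule.span ℂ (Set.range pauliSq) ≤ W := by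
    rw [Submodule.span_le]
    rintro _ ⟨j, rfl⟩
    fin_cases j
    · simpa [Submodule.smul_mem_iff _ hc] using hblock 0 0
    · simpa [Submodule.smul_mem_iff _ hc] using hblock 0 1
    · simpa [Submodule.smul_mem_iff _ hc] using hblock 1 0
    · simpa [Submodule.smul_mem_iff _ hc] using hblock 1 1
  calc 4 = Module.finrank ℂ (Submodule.span ℂ (Set.range pauliSq)) := by
        rw [finrank_span_eq_card linearIndependent_pauliSq, Fintype.card_fin]
    _ ≤ Module.finrank ℂ W := Submodule.finrank_mono hpauli
    _ ≤ r := (finrank_range_le_card _).trans_eq (Fintype.card_fin r)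

theorem stmt7 : Ufin ∈ Matrix.unitaryGroup (Fin 2 × Fin 2 × Fin 2) ℂ ∧ sr Ufin = 4 := by
  have hfour : 4 ∈ {r | ∃ A B C : Fin r → Matrix (Fin 2) (Fin 2) ℂ,
      Ufin = ∑ j, A j ⊗ₖ (B j ⊗ₖ C j)} := ⟨_, pauli, pauli, Ufin_eq_sum_kronecker⟩
  refine ⟨mem_unitaryGroup_iff.2 Ufin_mul_conjTranspose, le_antisymm (Nat.sInf_le hfour) ?_⟩
  exact le_csInf ⟨4, hfour⟩ fun r ⟨A, B, C, hU⟩ => four_le_of_Ufin_eq_sum_kronecker A B C hU
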